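/- arXiv:2102.06622 — 5 statements merged into one kernel-verified Lean document; each statement's English description precedes it below -/
import Mathlib

section
/- Let f be a convex differentiable function on a convex set U with minimizer u* ∈ U, and suppose that for all w ∈ U the directional derivative satisfies ⟨u* − w, ∇f(w)⟩ ∈ [−2DG, 0] for constants D, G > 0. Then for all w ∈ U: f(u*) − f(w) ≥ 2⟨u* − w, ∇f(w)⟩ + (1/(2DG))·(⟨u* − w, ∇f(w)⟩)². -/
/-!
The first-order characterisation of convexity gives `f u* - f w ≥ ⟪u* - w, ∇f w⟫ =: t`. Since
`-2DG ≤ t ≤ 0`, we have `t² ≤ -2DG t`, i.e. `t + t² / (2DG) ≤ 0`, and adding this to the first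
inequality gives the claim.
-/

open RealInnerProductSpace

theorem ConvexOn.inner_sub_le_sub_of_hasGradientAt {E : Type*} [NormedAddCommGroup E]
    [InnerProductSpace ℝ E] [CompleteSpace E] {s : Set E} {f : E → ℝ} {x y g : E}
    (hf : ConvexOn ℝ s f) (hx : x ∈ s) (hy : y ∈ s) (hg : HasGradientAt f g x) :
    ⟪y - x, g⟫ ≤ f y - f x := by
  set line : ℝ →ᵃ[ℝ] E := AffineMap.lineMap x y
  have hderiv : HasDerivAt (f ∘ line) ⟪y - x, g⟫ 0 := by
    simpa [real_inner_comm] using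
      hg.hasFDerivAt.comp_hasDerivAt_of_eq 0 AffineMap.hasDerivAt_lineMap (by simp)
  have hslope := (hf.comp_affineMap line).le_slope_of_hasDerivAt (x := 0) (y := 1)
    (by simpa [line]) (by simpa [line]) one_pos hderiv
  simpa [slope_def_field, line] using hslope

theorem one_div_mul_sq_le_neg_of_mem_Icc {t c : ℝ} (hc : 0 < c) (ht : t ∈ Set.Icc (-c) 0) :
    1 / c * t ^ 2 ≤ -t := by
  rw [one_div, inv_mul_le_iff₀ hc]
  nlinarith [ht.1, ht.2]

theorem stmt_1_general {d : ℕ} (U : Set (EuclideanSpace ℝ (Fin d)))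
    (f : EuclideanSpace ℝ (Fin d) → ℝ)
    (g : EuclideanSpace ℝ (Fin d) → EuclideanSpace ℝ (Fin d))
    (hf : ConvexOn ℝ U f)
    (hdiff : ∀ x ∈ U, HasGradientAt f (g x) x)
    (ustar : EuclideanSpace ℝ (Fin d)) (hustar : ustar ∈ U)
    (D G : ℝ) (hD : 0 < D) (hG : 0 < G)
    (hrange : ∀ w ∈ U, ⟪ustar - w, g w⟫ ∈ Set.Icc (-(2 * D * G)) 0) :
    ∀ w ∈ U,
      f ustar - f w ≥
        2 * ⟪ustar - w, g w⟫ + (1 / (2 * D * G)) * ⟪ustar - w, g w⟫ ^ 2 := by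
  intro w hw
  have hfirst := hf.inner_sub_le_sub_of_hasGradientAt hw hustar (hdiff w hw)
  have hquad := one_div_mul_sq_le_neg_of_mem_Icc (by positivity) (hrange w hw)
  linarith

theorem stmt_1 {d : ℕ} (U : Set (EuclideanSpace ℝ (Fin d))) (hU : Convex ℝ U)
    (f : EuclideanSpace ℝ (Fin d) → ℝ)
    (g : EuclideanSpace ℝ (Fin d) → EuclideanSpace ℝ (Fin d))
    (hf : ConvexOn ℝ U f)
    (hdiff : ∀ x ∈ U, HasGradientAt f (g x) x)
    (ustar : EuclideanSpace ℝ (Fin d)) (hustar : ustar ∈ U)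
    (hmin : ∀ u ∈ U, f ustar ≤ f u)
    (D G : ℝ) (hD : 0 < D) (hG : 0 < G)
    (hrange : ∀ w ∈ U, ⟪ustar - w, g w⟫ ∈ Set.Icc (-(2 * D * G)) 0) :
    ∀ w ∈ U,
      f ustar - f w ≥
        2 * ⟪ustar - w, g w⟫ + (1 / (2 * D * G)) * ⟪ustar - w, g w⟫ ^ 2 :=
  stmt_1_general U f g hf hdiff ustar hustar D G hD hG hrange
end

section
/- Let A, B be symmetric positive definite d×d matrices with A ⪰ B (i.e., A − B positive semi-definite). Then trace(A⁻¹(A − B)) ≤ log(det A / det B). -/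
/-!
With `T = A^{-1/2}` and `M = T B T` (positive definite), one has
`tr (A⁻¹ (A - B)) = d - tr M` and `det A / det B = (det M)⁻¹`, so the claim becomes
`log det M ≤ tr M - d`, which is `log λ ≤ λ - 1` summed over the eigenvalues of `M`.
-/

open scoped MatrixOrder

namespace Matrix

variable {n : Type*} [Fintype n] [DecidableEq n]

theorem PosDef.log_det_le_trace_sub_card {M : Matrix n n ℝ} (hM : M.PosDef) :
    Real.log M.det ≤ M.trace - Fintype.card n := by
  have hpos := hM.eigenvalues_pos
  rw [hM.1.det_eq_prod_eigenvalues, hM.1.trace_eq_sum_eigenvalues]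
  simp only [RCLike.ofReal_real_eq_id, id_eq]
  rw [Real.log_prod fun i _ => (hpos i).ne', Fintype.card_eq_sum_ones, Nat.cast_sum,
    ← Finset.sum_sub_distrib]
  exact Finset.sum_le_sum fun i _ => by simpa using Real.log_le_sub_one_of_pos (hpos i)

theorem PosDef.trace_inv_mul_sub_le_log_det_div {A B : Matrix n n ℝ} (hA : A.PosDef)
    (hB : B.PosDef) : (A⁻¹ * (A - B)).trace ≤ Real.log (A.det / B.det) := by
  set T := CFC.sqrt A⁻¹
  have hTT : T * T = A⁻¹ := CFC.sqrt_mul_sqrt_self _ hA.inv.posSemidef.nonneg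
  have hT : T.IsHermitian := (nonneg_iff_posSemidef.mp (CFC.sqrt_nonneg _)).isHermitian
  have hTunit : IsUnit T := CFC.isUnit_sqrt_iff_isStrictlyPositive.mpr
    (isStrictlyPositive_iff_posDef.mpr hA.inv)
  have hM : (T * B * T).PosDef := by
    simpa only [hT.eq] using hB.conjTranspose_mul_mul_same (B := T)
      (mulVec_injective_iff_isUnit.mpr (hT.eq.symm ▸ hTunit))
  have hAdet := hA.det_pos
  have htrace : (A⁻¹ * (A - B)).trace = Fintype.card n - (T * B * T).trace := by
    rw [Matrix.mul_sub, nonsing_inv_mul A (isUnit_iff_ne_zero.mpr hAdet.ne'), trace_sub,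
      trace_one, ← hTT, Matrix.mul_assoc, trace_mul_comm, Matrix.mul_assoc]
  have hdet : (T * B * T).det = B.det / A.det := by
    rw [det_mul, det_mul, mul_comm, ← mul_assoc, ← det_mul, hTT, det_nonsing_inv,
      Ring.inverse_eq_inv', div_eq_inv_mul]
  have hlog := hM.log_det_le_trace_sub_card
  rw [hdet, Real.log_div hB.det_pos.ne' hAdet.ne'] at hlog
  rw [htrace, Real.log_div hAdet.ne' hB.det_pos.ne']
  linarith

end Matrix

theorem stmt_7_general {d : ℕ} (A B : Matrix (Fin d) (Fin d) ℝ)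
    (hA : A.PosDef) (hB : B.PosDef) :
    (A⁻¹ * (A - B)).trace ≤ Real.log (A.det / B.det) :=
  hA.trace_inv_mul_sub_le_log_det_div hB

theorem stmt_7 {d : ℕ} (A B : Matrix (Fin d) (Fin d) ℝ)
    (hA : A.PosDef) (hB : B.PosDef) (hAB : (A - B).PosSemidef) :
    (A⁻¹ * (A - B)).trace ≤ Real.log (A.det / B.det) :=
  stmt_7_general A B hA hB
end

section
/- Let β ∈ (0,1], B > 0, C > 0, and let X, Y be real-valued random variables on a probability space such that X ≤ Y ≤ C pointwise, E[X²] ≤ B·E[X]^β (the Bernstein condition for X, with E[X] ≥ 0), and all moments below exist. Then E[Y²] ≤ B'·E[Y]^β for B' = max{ B, (2/β)·C^{2−β} }. -/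
/-!
Since `X + Y ≤ 2C`, pointwise `Y² - X² = (Y - X)(Y + X) ≤ 2C(Y - X)`, so
`E[Y²] ≤ B E[X]^β + 2C (E[Y] - E[X])`. By concavity of `t ↦ t^β`, the increment
`E[Y] - E[X]` is at most `E[Y]^(1-β) / β · (E[Y]^β - E[X]^β)`, and `E[Y]^(1-β) ≤ C^(1-β)`.
-/

open MeasureTheory

namespace Real

lemma mul_rpow_sub_one_mul_sub_le_rpow_sub_rpow {x y β : ℝ} (hx : 0 ≤ x) (hy : 0 < y)
    (hβ₀ : 0 ≤ β) (hβ₁ : β ≤ 1) :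
    β * y ^ (β - 1) * (y - x) ≤ y ^ β - x ^ β := by
  have hbernoulli := rpow_one_add_le_one_add_mul_self
    (show -1 ≤ x / y - 1 by linarith [div_nonneg hx hy.le]) hβ₀ hβ₁
  rw [add_sub_cancel, div_rpow hx hy.le, div_le_iff₀ (rpow_pos_of_pos hy β)] at hbernoulli
  have hy_pow : y ^ β = y ^ (β - 1) * y := by
    rw [← rpow_add_one hy.ne', sub_add_cancel]
  have hdiv : y ^ (β - 1) * y * (x / y) = y ^ (β - 1) * x := by
    field_simp
  rw [hy_pow] at hbernoulli ⊢
  nlinarith [hdiv]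

end Real

lemma mul_rpow_add_two_mul_sub_le_max_mul_rpow {β B C x y : ℝ} (hβ₀ : 0 < β) (hβ₁ : β ≤ 1)
    (hx : 0 ≤ x) (hxy : x ≤ y) (hyC : y ≤ C) :
    B * x ^ β + 2 * C * (y - x) ≤ max B ((2 / β) * C ^ (2 - β)) * y ^ β := by
  set M := max B ((2 / β) * C ^ (2 - β))
  rcases (hx.trans hxy).eq_or_lt with hy | hy
  · obtain rfl : x = 0 := le_antisymm (hy ▸ hxy) hx
    simp [← hy, Real.zero_rpow hβ₀.ne']
  have hC : 0 < C := hy.trans_le hyC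
  have hC_pow : C ≤ C ^ (2 - β) * y ^ (β - 1) := calc
    C = C ^ (2 - β) * C ^ (β - 1) := by
      rw [← Real.rpow_add hC, show 2 - β + (β - 1) = 1 by ring, Real.rpow_one]
    _ ≤ C ^ (2 - β) * y ^ (β - 1) :=
      mul_le_mul_of_nonneg_left (Real.rpow_le_rpow_of_nonpos hy hyC (by linarith))
        (by positivity)
  have hslope : 2 * C ≤ M * (β * y ^ (β - 1)) := calc
    2 * C ≤ (2 / β) * C ^ (2 - β) * (β * y ^ (β - 1)) := by
      rw [show (2 / β) * C ^ (2 - β) * (β * y ^ (β - 1)) = 2 * (C ^ (2 - β) * y ^ (β - 1)) by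
        field_simp]
      linarith
    _ ≤ M * (β * y ^ (β - 1)) := by
      gcongr
      exact le_max_right _ _
  have htangent := Real.mul_rpow_sub_one_mul_sub_le_rpow_sub_rpow hx hy hβ₀.le hβ₁
  calc B * x ^ β + 2 * C * (y - x)
      ≤ M * x ^ β + M * (β * y ^ (β - 1)) * (y - x) := by
        gcongr
        exact le_max_left _ _
    _ ≤ M * x ^ β + M * (y ^ β - x ^ β) := by
        rw [mul_assoc M]
        gcongr
    _ = M * y ^ β := by ring

lemma integral_sq_le_integral_sq_add_two_mul_sub {Ω : Type*} [MeasurableSpace Ω]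
    {μ : Measure Ω} {X Y : Ω → ℝ} {C : ℝ} (hXY : ∀ ω, X ω ≤ Y ω) (hYC : ∀ ω, Y ω ≤ C)
    (hXint : Integrable X μ) (hX2int : Integrable (fun ω => X ω ^ 2) μ)
    (hYint : Integrable Y μ) :
    ∫ ω, Y ω ^ 2 ∂μ ≤ ∫ ω, X ω ^ 2 ∂μ + 2 * C * (∫ ω, Y ω ∂μ - ∫ ω, X ω ∂μ) := by
  have hpointwise : ∀ ω, Y ω ^ 2 ≤ X ω ^ 2 + 2 * C * (Y ω - X ω) := fun ω => by
    have hsum : X ω + Y ω ≤ 2 * C := by linarith [hXY ω, hYC ω]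
    nlinarith [mul_le_mul_of_nonneg_left hsum (sub_nonneg.2 (hXY ω))]
  have hincr : Integrable (fun ω => 2 * C * (Y ω - X ω)) μ := (hYint.sub hXint).const_mul _
  calc ∫ ω, Y ω ^ 2 ∂μ ≤ ∫ ω, X ω ^ 2 + 2 * C * (Y ω - X ω) ∂μ :=
        integral_mono_of_nonneg (.of_forall fun ω => sq_nonneg (Y ω)) (hX2int.add hincr)
          (.of_forall hpointwise)
    _ = ∫ ω, X ω ^ 2 ∂μ + 2 * C * (∫ ω, Y ω ∂μ - ∫ ω, X ω ∂μ) := by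
        rw [integral_add hX2int hincr, integral_const_mul, integral_sub hYint hXint]

theorem stmt_9_general {Ω : Type*} [MeasurableSpace Ω] (μ : Measure Ω) [IsProbabilityMeasure μ]
    (X Y : Ω → ℝ) (β B C : ℝ) (hβ : β ∈ Set.Ioc (0:ℝ) 1)
    (hXY : ∀ ω, X ω ≤ Y ω) (hYC : ∀ ω, Y ω ≤ C)
    (hXint : Integrable X μ) (hX2int : Integrable (fun ω => X ω ^ 2) μ)
    (hYint : Integrable Y μ)
    (hEX : 0 ≤ ∫ ω, X ω ∂μ)
    (hbern : ∫ ω, X ω ^ 2 ∂μ ≤ B * (∫ ω, X ω ∂μ) ^ β) :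
    ∫ ω, Y ω ^ 2 ∂μ ≤ max B ((2 / β) * C ^ (2 - β)) * (∫ ω, Y ω ∂μ) ^ β := by
  have hEXY : ∫ ω, X ω ∂μ ≤ ∫ ω, Y ω ∂μ := integral_mono hXint hYint hXY
  have hEYC : ∫ ω, Y ω ∂μ ≤ C := by
    simpa using integral_mono hYint (integrable_const C) hYC
  calc ∫ ω, Y ω ^ 2 ∂μ
      ≤ ∫ ω, X ω ^ 2 ∂μ + 2 * C * (∫ ω, Y ω ∂μ - ∫ ω, X ω ∂μ) :=
        integral_sq_le_integral_sq_add_two_mul_sub hXY hYC hXint hX2int hYint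
    _ ≤ B * (∫ ω, X ω ∂μ) ^ β + 2 * C * (∫ ω, Y ω ∂μ - ∫ ω, X ω ∂μ) := by gcongr
    _ ≤ max B ((2 / β) * C ^ (2 - β)) * (∫ ω, Y ω ∂μ) ^ β :=
        mul_rpow_add_two_mul_sub_le_max_mul_rpow hβ.1 hβ.2 hEX hEXY hEYC

theorem stmt_9 {Ω : Type*} [MeasurableSpace Ω] (μ : Measure Ω) [IsProbabilityMeasure μ]
    (X Y : Ω → ℝ) (β B C : ℝ) (hβ : β ∈ Set.Ioc (0:ℝ) 1) (hB : 0 < B) (hC : 0 < C)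
    (hXY : ∀ ω, X ω ≤ Y ω) (hYC : ∀ ω, Y ω ≤ C)
    (hXint : Integrable X μ) (hX2int : Integrable (fun ω => X ω ^ 2) μ)
    (hYint : Integrable Y μ) (hY2int : Integrable (fun ω => Y ω ^ 2) μ)
    (hEX : 0 ≤ ∫ ω, X ω ∂μ)
    (hbern : ∫ ω, X ω ^ 2 ∂μ ≤ B * (∫ ω, X ω ∂μ) ^ β) :
    ∫ ω, Y ω ^ 2 ∂μ ≤ max B ((2 / β) * C ^ (2 - β)) * (∫ ω, Y ω ∂μ) ^ β :=
  stmt_9_general μ X Y β B C hβ hXY hYC hXint hX2int hYint hEX hbern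
end

section
/- Let X be a random vector in ℝᵈ with ‖X‖₂ ≤ 1 almost surely, Y a {−1,+1}-valued random variable, f_u the hinge loss f(u) = max{0, 1 − Y·⟨u,X⟩} restricted to the unit ball U = {u : ‖u‖₂ ≤ 1}, μ = E[Y·X] with ‖μ‖₂ > 0, and λ_max the maximum eigenvalue of E[X Xᵀ]. Then (a) u* := μ/‖μ‖₂ minimizes E[f(u)] over U, and (b) for all w ∈ U: (w − u*)ᵀ E[X Xᵀ] (w − u*) ≤ (2λ_max/‖μ‖₂) · ⟨w − u*, −μ⟩. -/
/-!
On the unit ball the margin `Y ⟪u, X⟫` lies in `[-1, 1]`, so the hinge loss is affine in `u`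
with expectation `1 - ⟪u, m⟫`, which Cauchy–Schwarz minimises at `u* = m / ‖m‖`. For (b), the
quadratic form of `M` is at most `λ_max ‖w - u*‖²`, and for `‖w‖ ≤ 1 = ‖u*‖` one has
`‖w - u*‖² ≤ 2 (1 - ⟪w, u*⟫) = (2 / ‖m‖) ⟪w - u*, -m⟫`; here `λ_max ≥ 0` because the diagonal
entries of `M` are second moments.
-/

open MeasureTheory RealInnerProductSpace

namespace Matrix.IsHermitian

variable {n : Type*} [Fintype n] [DecidableEq n] {A : Matrix n n ℝ} {c : ℝ}

theorem posSemidef_smul_one_sub (hA : A.IsHermitian) (hc : ∀ i, hA.eigenvalues i ≤ c) :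
    (c • 1 - A).PosSemidef := by
  set U : Matrix n n ℝ := (hA.eigenvectorUnitary : Matrix n n ℝ)
  have hdiag : (diagonal fun i => c - hA.eigenvalues i).PosSemidef :=
    PosSemidef.diagonal fun i => sub_nonneg.2 (hc i)
  have hconj : U * diagonal (fun i => c - hA.eigenvalues i) * Uᴴ = c • 1 - A := by
    have hU : U * Uᴴ = 1 := mem_unitaryGroup_iff.mp hA.eigenvectorUnitary.2
    have hsplit : diagonal (fun i => c - hA.eigenvalues i)
        = c • 1 - diagonal (RCLike.ofReal ∘ hA.eigenvalues) := by
      ext i j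
      by_cases h : i = j <;> simp [h]
    rw [hsplit, Matrix.mul_sub, Matrix.sub_mul, Matrix.mul_smul, Matrix.mul_one, Matrix.smul_mul,
      hU]
    exact congrArg _ hA.spectral_theorem.symm
  exact hconj ▸ hdiag.mul_mul_conjTranspose_same U

theorem dotProduct_mulVec_le (hA : A.IsHermitian) (hc : ∀ i, hA.eigenvalues i ≤ c)
    (v : n → ℝ) : v ⬝ᵥ A *ᵥ v ≤ c * (v ⬝ᵥ v) := by
  have h := (hA.posSemidef_smul_one_sub hc).dotProduct_mulVec_nonneg v
  simp only [star_trivial, sub_mulVec, smul_mulVec, one_mulVec, dotProduct_sub,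
    dotProduct_smul, smul_eq_mul] at h
  linarith

theorem apply_self_le (hA : A.IsHermitian) (hc : ∀ i, hA.eigenvalues i ≤ c) (i : n) :
    A i i ≤ c := by
  simpa using hA.dotProduct_mulVec_le hc (Pi.single i 1)

theorem sum_mul_mul_le (hA : A.IsHermitian) (hc : ∀ i, hA.eigenvalues i ≤ c)
    (v : EuclideanSpace ℝ n) : ∑ i, ∑ j, v i * A i j * v j ≤ c * ‖v‖ ^ 2 := by
  have hquad : ∑ i, ∑ j, v i * A i j * v j = v.ofLp ⬝ᵥ A *ᵥ v.ofLp := by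
    simp only [dotProduct, mulVec, Finset.mul_sum, mul_assoc]
  have hnorm : ‖v‖ ^ 2 = v.ofLp ⬝ᵥ v.ofLp := by
    rw [← real_inner_self_eq_norm_sq, EuclideanSpace.inner_eq_star_dotProduct, star_trivial]
  rw [hquad, hnorm]
  exact hA.dotProduct_mulVec_le hc v.ofLp

end Matrix.IsHermitian

section

variable {E : Type*} [NormedAddCommGroup E] [InnerProductSpace ℝ E]

theorem real_inner_normalize_self (m : E) : ⟪NormedSpace.normalize m, m⟫ = ‖m‖ := by
  rw [NormedSpace.normalize, real_inner_smul_left, real_inner_self_eq_norm_sq, sq, ← mul_assoc,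
    inv_mul_mul_self]

theorem real_inner_le_inner_normalize_self {u : E} (hu : ‖u‖ ≤ 1) (m : E) :
    ⟪u, m⟫ ≤ ⟪NormedSpace.normalize m, m⟫ := by
  rw [real_inner_normalize_self]
  calc ⟪u, m⟫ ≤ ‖u‖ * ‖m‖ := real_inner_le_norm u m
    _ ≤ ‖m‖ := mul_le_of_le_one_left (norm_nonneg m) hu

theorem real_inner_sub_normalize_neg {m : E} (hm : m ≠ 0) (w : E) :
    ⟪w - NormedSpace.normalize m, -m⟫ = ‖m‖ * (1 - ⟪w, NormedSpace.normalize m⟫) := by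
  rw [inner_neg_right, inner_sub_left, real_inner_normalize_self, NormedSpace.normalize,
    real_inner_smul_right]
  field_simp [norm_ne_zero_iff.mpr hm]
  ring

theorem norm_sub_sq_le_two_mul_one_sub_inner {w u : E} (hw : ‖w‖ ≤ 1) (hu : ‖u‖ = 1) :
    ‖w - u‖ ^ 2 ≤ 2 * (1 - ⟪w, u⟫) := by
  rw [norm_sub_sq_real, hu]
  nlinarith [norm_nonneg w]

theorem integral_hinge_eq_one_sub_inner [CompleteSpace E] {Ω : Type*} [MeasurableSpace Ω]
    {μ : Measure Ω} [IsProbabilityMeasure μ] {X : Ω → E} {Y : Ω → ℝ}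
    (hYX : Integrable (fun ω => Y ω • X ω) μ) (hYX_le : ∀ ω, ‖Y ω • X ω‖ ≤ 1)
    {u : E} (hu : ‖u‖ ≤ 1) :
    ∫ ω, max 0 (1 - Y ω * ⟪u, X ω⟫) ∂μ = 1 - ⟪u, ∫ ω, Y ω • X ω ∂μ⟫ := by
  have hlin : ∀ ω, Y ω * ⟪u, X ω⟫ = ⟪u, Y ω • X ω⟫ := fun ω => (real_inner_smul_right ..).symm
  have hmargin : ∀ ω, ⟪u, Y ω • X ω⟫ ≤ 1 := fun ω =>
    (real_inner_le_norm _ _).trans (mul_le_one₀ hu (norm_nonneg _) (hYX_le ω))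
  simp only [hlin, max_eq_right (sub_nonneg.mpr (hmargin _))]
  rw [integral_sub (integrable_const 1) (hYX.const_inner u), integral_inner hYX,
    integral_const, probReal_univ, one_smul]

end

theorem stmt_10 {d : ℕ} (hd : 0 < d) {Ω : Type*} [MeasurableSpace Ω]
    (μ : Measure Ω) [IsProbabilityMeasure μ]
    (X : Ω → EuclideanSpace ℝ (Fin d)) (Y : Ω → ℝ)
    (hXmeas : Measurable X) (hYmeas : Measurable Y)
    (hXnorm : ∀ ω, ‖X ω‖ ≤ 1) (hYsign : ∀ ω, Y ω = 1 ∨ Y ω = -1)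
    (m : EuclideanSpace ℝ (Fin d)) (hm : m = ∫ ω, Y ω • X ω ∂μ) (hm0 : 0 < ‖m‖)
    (M : Matrix (Fin d) (Fin d) ℝ)
    (hMdef : ∀ i j, M i j = ∫ ω, X ω i * X ω j ∂μ)
    (hMh : M.IsHermitian)
    (lamMax : ℝ) (hlam : lamMax = ⨆ i, hMh.eigenvalues i)
    (ustar : EuclideanSpace ℝ (Fin d)) (hustar : ustar = ‖m‖⁻¹ • m) :
    (∀ u : EuclideanSpace ℝ (Fin d), ‖u‖ ≤ 1 →
        ∫ ω, max 0 (1 - Y ω * ⟪ustar, X ω⟫) ∂μ ≤ ∫ ω, max 0 (1 - Y ω * ⟪u, X ω⟫) ∂μ) ∧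
    (∀ w : EuclideanSpace ℝ (Fin d), ‖w‖ ≤ 1 →
        ∑ i, ∑ j, (w - ustar) i * M i j * (w - ustar) j
          ≤ 2 * lamMax / ‖m‖ * ⟪w - ustar, -m⟫) := by
  have hYX_le : ∀ ω, ‖Y ω • X ω‖ ≤ 1 := fun ω => by
    rcases hYsign ω with h | h <;> simpa [h, norm_smul] using hXnorm ω
  have hYX : Integrable (fun ω => Y ω • X ω) μ :=
    .of_bound (hYmeas.smul hXmeas).aestronglyMeasurable 1 (ae_of_all _ hYX_le)
  have hrisk : ∀ u : EuclideanSpace ℝ (Fin d), ‖u‖ ≤ 1 →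
      ∫ ω, max 0 (1 - Y ω * ⟪u, X ω⟫) ∂μ = 1 - ⟪u, m⟫ := fun u hu =>
    hm ▸ integral_hinge_eq_one_sub_inner hYX hYX_le hu
  have hm_ne : m ≠ 0 := norm_pos_iff.mp hm0
  replace hustar : ustar = NormedSpace.normalize m := hustar
  have hustar_norm : ‖ustar‖ = 1 := hustar ▸ NormedSpace.norm_normalize_eq_one_iff.mpr hm_ne
  refine ⟨fun u hu => ?_, fun w hw => ?_⟩
  · rw [hrisk ustar hustar_norm.le, hrisk u hu, hustar]
    exact sub_le_sub_left (real_inner_le_inner_normalize_self hu m) 1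
  · have hlam_ge : ∀ i, hMh.eigenvalues i ≤ lamMax :=
      hlam ▸ fun i => le_ciSup (Set.finite_range _).bddAbove i
    have hlam_nonneg : 0 ≤ lamMax :=
      calc 0 ≤ ∫ ω, X ω ⟨0, hd⟩ * X ω ⟨0, hd⟩ ∂μ := integral_nonneg fun ω => mul_self_nonneg _
        _ = M ⟨0, hd⟩ ⟨0, hd⟩ := (hMdef _ _).symm
        _ ≤ lamMax := hMh.apply_self_le hlam_ge _
    calc ∑ i, ∑ j, (w - ustar) i * M i j * (w - ustar) j
        ≤ lamMax * ‖w - ustar‖ ^ 2 := hMh.sum_mul_mul_le hlam_ge _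
      _ ≤ lamMax * (2 * (1 - ⟪w, ustar⟫)) := by
        gcongr
        exact norm_sub_sq_le_two_mul_one_sub_inner hw hustar_norm
      _ = 2 * lamMax / ‖m‖ * ⟪w - ustar, -m⟫ := by
        rw [hustar, real_inner_sub_normalize_neg hm_ne]
        field_simp
end

section
/- Let x be a random vector in ℝᵈ, h' : ℝ → ℝ a measurable function, w ∈ ℝᵈ, and suppose 0 < L₋ ≤ |h'(⟨w,x⟩)| ≤ L₊ almost surely, and E[x·xᵀ] ⪰ C·diag(E[x·xᵀ]) for some C > 0, where diag(M) zeroes out off-diagonal entries. Then E[ h'(⟨w,x⟩)²·x·xᵀ ] ⪰ (C·L₋²/L₊²)·diag( E[ h'(⟨w,x⟩)²·x·xᵀ ] ). -/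
/-!
For every `v`, `vᵀ Mg v = E[h'(⟨w,x⟩)² ⟨v,x⟩²] ≥ Lm² · vᵀ Mx v ≥ C Lm² · vᵀ diag(Mx) v`, while
pointwise `h'² ≤ Lp²` gives `Mg ≤ Lp² • Mx` in the Loewner order, in particular
`diag(Mg) ≤ Lp² • diag(Mx)`. Chaining the two bounds gives the claim.
-/

open MeasureTheory RealInnerProductSpace Matrix

namespace Matrix

variable {ι : Type*} [Fintype ι]

lemma dotProduct_diagonal_mulVec_self [DecidableEq ι] (d v : ι → ℝ) :
    v ⬝ᵥ diagonal d *ᵥ v = ∑ i, d i * v i ^ 2 := by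
  simp only [dotProduct, mulVec_diagonal]
  exact Finset.sum_congr rfl fun i _ => by ring

lemma posSemidef_sub_smul_diagonal_of_loewner_sandwich [DecidableEq ι] {A B : Matrix ι ι ℝ}
    {a b C : ℝ} (hB : B.IsHermitian) (ha : 0 ≤ a) (hb : 0 < b) (hC : 0 ≤ C)
    (hA : (A - C • diagonal fun i => A i i).PosSemidef)
    (hlow : ∀ v, a * (v ⬝ᵥ A *ᵥ v) ≤ v ⬝ᵥ B *ᵥ v)
    (hup : ∀ v, v ⬝ᵥ B *ᵥ v ≤ b * (v ⬝ᵥ A *ᵥ v)) :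
    (B - (C * a / b) • diagonal fun i => B i i).PosSemidef := by
  have hdiag (i : ι) : B i i ≤ b * A i i := by simpa using hup (Pi.single i 1)
  rw [posSemidef_iff_dotProduct_mulVec]
  refine ⟨hB.sub ((isHermitian_diagonal _).smul (IsSelfAdjoint.all _)), fun v => ?_⟩
  have hAv := hA.dotProduct_mulVec_nonneg v
  simp only [star_trivial, sub_mulVec, dotProduct_sub, smul_mulVec, dotProduct_smul, smul_eq_mul,
    dotProduct_diagonal_mulVec_self, sub_nonneg] at hAv ⊢
  calc C * a / b * ∑ i, B i i * v i ^ 2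
      ≤ C * a / b * (b * ∑ i, A i i * v i ^ 2) := by
        have hBA : ∑ i, B i i * v i ^ 2 ≤ b * ∑ i, A i i * v i ^ 2 := by
          rw [Finset.mul_sum]
          exact Finset.sum_le_sum fun i _ => by nlinarith [hdiag i, sq_nonneg (v i)]
        gcongr
    _ = a * (C * ∑ i, A i i * v i ^ 2) := by field_simp
    _ ≤ a * (v ⬝ᵥ A *ᵥ v) := by gcongr
    _ ≤ v ⬝ᵥ B *ᵥ v := hlow v

end Matrix

section WeightedSecondMoment

variable {Ω ι : Type*} [MeasurableSpace Ω]

noncomputable def weightedSecondMoment (μ : Measure Ω) (c : Ω → ℝ) (x : Ω → ι → ℝ) :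
    Matrix ι ι ℝ :=
  of fun i j => ∫ ω, c ω * (x ω i * x ω j) ∂μ

variable {μ : Measure Ω} {c c₁ c₂ : Ω → ℝ} {x : Ω → ι → ℝ}

lemma weightedSecondMoment_isHermitian : (weightedSecondMoment μ c x).IsHermitian := by
  ext i j
  simp only [weightedSecondMoment, conjTranspose_apply, star_trivial, of_apply, mul_comm (x _ i)]

lemma weightedSecondMoment_const_mul (a : ℝ) :
    weightedSecondMoment μ (fun ω => a * c ω) x = a • weightedSecondMoment μ c x := by
  ext i j
  simp only [weightedSecondMoment, of_apply, Matrix.smul_apply, smul_eq_mul, mul_assoc,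
    integral_const_mul]

variable [Fintype ι]

lemma mul_dotProduct_sq_eq_sum (c : ℝ) (y v : ι → ℝ) :
    c * (v ⬝ᵥ y) ^ 2 = ∑ i, ∑ j, v i * v j * (c * (y i * y j)) := by
  rw [dotProduct, sq, Finset.sum_mul_sum, Finset.mul_sum]
  exact Finset.sum_congr rfl fun i _ => by
    rw [Finset.mul_sum]
    exact Finset.sum_congr rfl fun j _ => by ring

lemma integrable_mul_dotProduct_sq (hint : ∀ i j, Integrable (fun ω => c ω * (x ω i * x ω j)) μ)
    (v : ι → ℝ) : Integrable (fun ω => c ω * (v ⬝ᵥ x ω) ^ 2) μ := by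
  simp only [mul_dotProduct_sq_eq_sum]
  exact integrable_finsetSum _ fun i _ =>
    integrable_finsetSum _ fun j _ => (hint i j).const_mul _

lemma dotProduct_weightedSecondMoment_mulVec
    (hint : ∀ i j, Integrable (fun ω => c ω * (x ω i * x ω j)) μ) (v : ι → ℝ) :
    v ⬝ᵥ weightedSecondMoment μ c x *ᵥ v = ∫ ω, c ω * (v ⬝ᵥ x ω) ^ 2 ∂μ := by
  simp only [mul_dotProduct_sq_eq_sum]
  rw [integral_finsetSum _ fun i _ =>
    integrable_finsetSum _ fun j _ => (hint i j).const_mul _]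
  simp only [dotProduct, mulVec, weightedSecondMoment, of_apply, Finset.mul_sum]
  refine Finset.sum_congr rfl fun i _ => ?_
  rw [integral_finsetSum _ fun j _ => (hint i j).const_mul _]
  exact Finset.sum_congr rfl fun j _ => by rw [integral_const_mul]; ring

lemma dotProduct_weightedSecondMoment_mulVec_mono
    (hint₁ : ∀ i j, Integrable (fun ω => c₁ ω * (x ω i * x ω j)) μ)
    (hint₂ : ∀ i j, Integrable (fun ω => c₂ ω * (x ω i * x ω j)) μ)
    (hc : c₁ ≤ᵐ[μ] c₂) (v : ι → ℝ) :
    v ⬝ᵥ weightedSecondMoment μ c₁ x *ᵥ v ≤ v ⬝ᵥ weightedSecondMoment μ c₂ x *ᵥ v := by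
  rw [dotProduct_weightedSecondMoment_mulVec hint₁, dotProduct_weightedSecondMoment_mulVec hint₂]
  refine integral_mono_ae (integrable_mul_dotProduct_sq hint₁ v)
    (integrable_mul_dotProduct_sq hint₂ v) ?_
  filter_upwards [hc] with ω hω
  exact mul_le_mul_of_nonneg_right hω (sq_nonneg _)

end WeightedSecondMoment

theorem stmt_16 {d : ℕ} {Ω : Type*} [MeasurableSpace Ω] (μ : Measure Ω)
    [IsProbabilityMeasure μ]
    (x : Ω → EuclideanSpace ℝ (Fin d)) (h' : ℝ → ℝ) (w : EuclideanSpace ℝ (Fin d))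
    (Lm Lp C : ℝ) (hLm : 0 < Lm) (hC : 0 < C)
    (hbound : ∀ᵐ ω ∂μ, Lm ≤ |h' ⟪w, x ω⟫| ∧ |h' ⟪w, x ω⟫| ≤ Lp)
    (hint1 : ∀ i j, Integrable (fun ω => x ω i * x ω j) μ)
    (hint2 : ∀ i j, Integrable (fun ω => h' ⟪w, x ω⟫ ^ 2 * (x ω i * x ω j)) μ)
    (Mx Mg : Matrix (Fin d) (Fin d) ℝ)
    (hMx : ∀ i j, Mx i j = ∫ ω, x ω i * x ω j ∂μ)
    (hMg : ∀ i j, Mg i j = ∫ ω, h' ⟪w, x ω⟫ ^ 2 * (x ω i * x ω j) ∂μ)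
    (hcov : (Mx - C • Matrix.diagonal (fun i => Mx i i)).PosSemidef) :
    (Mg - (C * Lm ^ 2 / Lp ^ 2) • Matrix.diagonal (fun i => Mg i i)).PosSemidef := by
  set X : Ω → Fin d → ℝ := fun ω => (x ω).ofLp
  have hMx' : Mx = weightedSecondMoment μ (fun _ => 1) X :=
    Matrix.ext fun i j => by simp [hMx, weightedSecondMoment, X]
  have hMg' : Mg = weightedSecondMoment μ (fun ω => h' ⟪w, x ω⟫ ^ 2) X := Matrix.ext hMg
  subst hMx' hMg'
  have hint_const (a : ℝ) (i j : Fin d) : Integrable (fun ω => a * 1 * (X ω i * X ω j)) μ := by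
    simpa using (hint1 i j).const_mul a
  have hLp : 0 < Lp := by
    obtain ⟨_, h₁, h₂⟩ := hbound.exists
    exact hLm.trans_le (h₁.trans h₂)
  refine posSemidef_sub_smul_diagonal_of_loewner_sandwich weightedSecondMoment_isHermitian
    (sq_nonneg Lm) (by positivity) hC.le hcov (fun v => ?_) (fun v => ?_)
  · have hweight : (fun _ => Lm ^ 2 * 1) ≤ᵐ[μ] fun ω => h' ⟪w, x ω⟫ ^ 2 :=
      hbound.mono fun ω hω => by simpa using pow_le_pow_left₀ hLm.le hω.1 2
    simpa only [weightedSecondMoment_const_mul, smul_mulVec, dotProduct_smul, smul_eq_mul] using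
      dotProduct_weightedSecondMoment_mulVec_mono (hint_const _) hint2 hweight v
  · have hweight : (fun ω => h' ⟪w, x ω⟫ ^ 2) ≤ᵐ[μ] fun _ => Lp ^ 2 * 1 :=
      hbound.mono fun ω hω => by simpa using pow_le_pow_left₀ (abs_nonneg _) hω.2 2
    simpa only [weightedSecondMoment_const_mul, smul_mulVec, dotProduct_smul, smul_eq_mul] using
      dotProduct_weightedSecondMoment_mulVec_mono hint2 (hint_const _) hweight v
end
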